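/- arXiv:2501.11208 — 2 statements merged into one kernel-verified Lean document; each statement's English description precedes it below -/
import Mathlib

section
/- (Core identity of the Tensor Reshape Theorem I.) Let F ∈ ℝ^{r₁×⋯×r_K}, A_k ∈ ℝ^{d_k×r_k} for k = 1,…,K, and let 𝒜 = {a₁<⋯<a_ℓ} ⊆ {1,…,K} with complement {c₁<⋯<c_{K−ℓ}}. Then Reshape(F ×₁ A₁ ×₂ ⋯ ×_K A_K, 𝒜) = Reshape(F, 𝒜) ×₁ A_{c₁} ×₂ ⋯ ×_{K−ℓ} A_{c_{K−ℓ}} ×_{K−ℓ+1} (A_{a_ℓ} ⊗ A_{a_{ℓ−1}} ⊗ ⋯ ⊗ A_{a₁}). -/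
open Matrix

/-!
STATEMENT 3 (core identity of Tensor Reshape Theorem I):
for `𝒜 = {a₁<⋯<a_ℓ} ⊆ {1,…,K}` with complement `{c₁<⋯<c_{K−ℓ}}`,
`Reshape(F ×₁ A₁ ⋯ ×_K A_K, 𝒜)
   = Reshape(F, 𝒜) ×₁ A_{c₁} ⋯ ×_{K−ℓ} A_{c_{K−ℓ}} ×_{K−ℓ+1} (A_{a_ℓ} ⊗ ⋯ ⊗ A_{a₁})`.

An order-`K` tensor of dimensions `I : Fin K → ℕ` is a function
`((k : Fin K) → Fin (I k)) → ℝ`.  `Reshape(X, 𝒜)` is represented as a function of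
the complement multi-index `c` (the un-merged modes, in ascending order) and the
merged last-mode index `m`, where the merged index tuple
`(a : {a // a ∈ 𝒜}) → Fin (I a)` corresponds to the flat index
`1 + Σ_s (i_{a_s} − 1) ∏_{u<s} I_{a_u}` (lower modes of `𝒜` varying fastest).
Under this correspondence the Kronecker product in descending order
`A_{a_ℓ} ⊗ ⋯ ⊗ A_{a₁}` is `kronPi` over `{a // a ∈ 𝒜}`, and the multi-mode
product of the reshaped tensor by `A_{c₁},…,A_{c_{K−ℓ}}` on the first `K−ℓ` modes
is given by `kronPi` over `{j // j ∉ 𝒜}` acting on the complement multi-index.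
-/

/-- An order-`K` tensor with mode dimensions `I`. -/
abbrev Tensor {K : ℕ} (I : Fin K → ℕ) : Type := ((k : Fin K) → Fin (I k)) → ℝ

/-- Iterated Kronecker product of a family of matrices (in descending index order),
under the identification of the flattened row/column indices with tuples. -/
def kronPi {ι : Type*} [Fintype ι] {m n : ι → ℕ}
    (A : (k : ι) → Matrix (Fin (m k)) (Fin (n k)) ℝ) :
    Matrix ((k : ι) → Fin (m k)) ((k : ι) → Fin (n k)) ℝ :=
  Matrix.of fun i j => ∏ k, A k (i k) (j k)

/-- The multi-mode product `F ×₁ A₁ ×₂ ⋯ ×_K A_K`, written entrywise. -/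
def multiMode {K : ℕ} {d r : Fin K → ℕ}
    (A : (k : Fin K) → Matrix (Fin (d k)) (Fin (r k)) ℝ) (F : Tensor r) : Tensor d :=
  fun i => ∑ x : (k : Fin K) → Fin (r k), (∏ k, A k (i k) (x k)) * F x

/-- The reshape of a tensor along the mode set `𝒜`: a tensor whose first modes are the
modes not in `𝒜` (in ascending order) and whose last mode is the merged `𝒜`-modes. -/
def Reshape {K : ℕ} {I : Fin K → ℕ} (X : Tensor I) (𝒜 : Finset (Fin K)) :
    ((j : {j : Fin K // j ∉ 𝒜}) → Fin (I j.1)) →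
      ((a : {a : Fin K // a ∈ 𝒜}) → Fin (I a.1)) → ℝ :=
  fun c m => X fun k => if h : k ∈ 𝒜 then m ⟨k, h⟩ else c ⟨k, h⟩

set_option maxHeartbeats 1000000 in
theorem reshape_multiMode {K : ℕ} {d r : Fin K → ℕ}
    (A : (k : Fin K) → Matrix (Fin (d k)) (Fin (r k)) ℝ) (F : Tensor r)
    (𝒜 : Finset (Fin K)) :
    Reshape (multiMode A F) 𝒜 = fun c m =>
      ∑ xc : (j : {j : Fin K // j ∉ 𝒜}) → Fin (r j.1),
        ∑ xm : (a : {a : Fin K // a ∈ 𝒜}) → Fin (r a.1),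
          kronPi (fun j : {j : Fin K // j ∉ 𝒜} => A j.1) c xc *
            kronPi (fun a : {a : Fin K // a ∈ 𝒜} => A a.1) m xm *
              Reshape F 𝒜 xc xm := by
  funext c m
  simp only [Reshape, multiMode, kronPi, Matrix.of_apply]
  rw [show (∑ xc : (j : {j : Fin K // j ∉ 𝒜}) → Fin (r j.1),
      ∑ xm : (a : {a : Fin K // a ∈ 𝒜}) → Fin (r a.1),
        (∏ j : {j : Fin K // j ∉ 𝒜}, A j.1 (c j) (xc j)) *
          (∏ a : {a : Fin K // a ∈ 𝒜}, A a.1 (m a) (xm a)) *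
            F (fun k => if h : k ∈ 𝒜 then xm ⟨k, h⟩ else xc ⟨k, h⟩))
      = ∑ p : ((j : {j : Fin K // j ∉ 𝒜}) → Fin (r j.1)) ×
          ((a : {a : Fin K // a ∈ 𝒜}) → Fin (r a.1)),
        (∏ j : {j : Fin K // j ∉ 𝒜}, A j.1 (c j) (p.1 j)) *
          (∏ a : {a : Fin K // a ∈ 𝒜}, A a.1 (m a) (p.2 a)) *
            F (fun k => if h : k ∈ 𝒜 then p.2 ⟨k, h⟩ else p.1 ⟨k, h⟩)
      from (Fintype.sum_prod_type (f := fun p : ((j : {j : Fin K // j ∉ 𝒜}) → Fin (r j.1)) ×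
          ((a : {a : Fin K // a ∈ 𝒜}) → Fin (r a.1)) =>
        (∏ j : {j : Fin K // j ∉ 𝒜}, A j.1 (c j) (p.1 j)) *
          (∏ a : {a : Fin K // a ∈ 𝒜}, A a.1 (m a) (p.2 a)) *
            F (fun k => if h : k ∈ 𝒜 then p.2 ⟨k, h⟩ else p.1 ⟨k, h⟩))).symm]
  refine Fintype.sum_bijective
    (fun x => (fun j => x j.1, fun a => x a.1)) ⟨?_, ?_⟩ _ _ ?_
  · intro x y h
    funext k
    by_cases hk : k ∈ 𝒜
    · exact congrFun (congrArg Prod.snd h) ⟨k, hk⟩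
    · exact congrFun (congrArg Prod.fst h) ⟨k, hk⟩
  · intro p
    refine ⟨fun k => if h : k ∈ 𝒜 then p.2 ⟨k, h⟩ else p.1 ⟨k, h⟩, ?_⟩
    refine Prod.ext ?_ ?_ <;> funext a
    · exact dif_neg a.2
    · exact dif_pos a.2
  · intro x
    dsimp only
    have hprod : (∏ k, A k (if h : k ∈ 𝒜 then m ⟨k, h⟩ else c ⟨k, h⟩) (x k))
        = (∏ j : {j : Fin K // j ∉ 𝒜}, A j.1 (c j) (x j.1)) *
          (∏ a : {a : Fin K // a ∈ 𝒜}, A a.1 (m a) (x a.1)) := by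
      rw [← Fintype.prod_subtype_mul_prod_subtype (fun k => k ∈ 𝒜)
        (fun k => A k (if h : k ∈ 𝒜 then m ⟨k, h⟩ else c ⟨k, h⟩) (x k)), mul_comm]
      congr 1
      · refine Finset.prod_congr ?_ fun j _ => ?_
        · congr!
        · rw [dif_neg j.2]
      · refine Finset.prod_congr ?_ fun a _ => ?_
        · congr!
        · rw [dif_pos a.2]
    rw [hprod]
    exact congrArg _ (congrArg F (funext fun k => by
      by_cases hk : k ∈ 𝒜 <;> simp [hk]))
end

section
/- (Row-wise Kronecker product perturbation bound.) For a matrix A, let ρ(A) := max_i ‖A_{i·}‖₂ denote the maximal Euclidean norm of a row of A. Let K ≥ 1 and let B_k, C_k ∈ ℝ^{m_k×n_k} for k = 1,…,K. Then ρ( (B_K ⊗ ⋯ ⊗ B₁) − (C_K ⊗ ⋯ ⊗ C₁) ) ≤ Σ_{k=1}^{K} ( ∏_{j=k+1}^{K} ρ(C_j) ) · ρ(B_k − C_k) · ( ∏_{j=1}^{k−1} ρ(B_j) ). -/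
open Matrix

/-- `ρ(M)`: the maximal Euclidean norm of a row of `M`. -/
noncomputable def rowMaxNorm {α β : Type*} [Fintype β] (M : Matrix α β ℝ) : ℝ :=
  ⨆ i, Real.sqrt (∑ j, M i j ^ 2)

noncomputable def rowNorm {α β : Type*} [Fintype β] (M : Matrix α β ℝ) (i : α) : ℝ :=
  Real.sqrt (∑ j, M i j ^ 2)

lemma rowNorm_nonneg {α β : Type*} [Fintype β] (M : Matrix α β ℝ) (i : α) :
    0 ≤ rowNorm M i := Real.sqrt_nonneg _

lemma rowMaxNorm_eq_iSup {α β : Type*} [Fintype β] (M : Matrix α β ℝ) :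
    rowMaxNorm M = ⨆ i, rowNorm M i := rfl

lemma rowMaxNorm_nonneg {α β : Type*} [Fintype β] (M : Matrix α β ℝ) :
    0 ≤ rowMaxNorm M := Real.iSup_nonneg fun _ => Real.sqrt_nonneg _

lemma rowNorm_le_rowMaxNorm {α β : Type*} [Finite α] [Fintype β] (M : Matrix α β ℝ) (i : α) :
    rowNorm M i ≤ rowMaxNorm M := by
  rw [rowMaxNorm_eq_iSup]
  exact le_ciSup (Finite.bddAbove_range _) i

lemma sqrt_prod' {ι : Type*} (s : Finset ι) (f : ι → ℝ) (hf : ∀ i ∈ s, 0 ≤ f i) :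
    Real.sqrt (∏ i ∈ s, f i) = ∏ i ∈ s, Real.sqrt (f i) := by
  induction s using Finset.cons_induction with
  | empty => simp
  | cons a s ha ih =>
    rw [Finset.prod_cons, Finset.prod_cons,
      Real.sqrt_mul (hf a (Finset.mem_cons_self a s)),
      ih fun i hi => hf i (Finset.mem_cons_of_mem hi)]

lemma rowNorm_kronPi {ι : Type*} [Fintype ι] [DecidableEq ι] {m n : ι → ℕ}
    (A : (k : ι) → Matrix (Fin (m k)) (Fin (n k)) ℝ) (i : (k : ι) → Fin (m k)) :
    rowNorm (kronPi A) i = ∏ k, rowNorm (A k) (i k) := by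
  unfold rowNorm kronPi
  rw [← sqrt_prod' _ _ (fun k _ => Finset.sum_nonneg fun j _ => sq_nonneg _)]
  congr 1
  rw [Finset.prod_univ_sum, Fintype.piFinset_univ]
  simp only [Matrix.of_apply]
  exact Finset.sum_congr rfl fun j _ => (Finset.prod_pow _ _ _).symm

lemma rowNorm_eq_norm {α β : Type*} [Fintype β] (M : Matrix α β ℝ) (i : α) :
    rowNorm M i = ‖(WithLp.linearEquiv 2 ℝ (β → ℝ)).symm (M i)‖ := by
  rw [EuclideanSpace.norm_eq]
  simp [rowNorm, sq_abs, WithLp.linearEquiv]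

lemma rowNorm_sum_le {α β ι : Type*} [Fintype β] (s : Finset ι)
    (M : ι → Matrix α β ℝ) (i : α) :
    rowNorm (∑ k ∈ s, M k) i ≤ ∑ k ∈ s, rowNorm (M k) i := by
  have e1 : ((∑ k ∈ s, M k) i) = ∑ k ∈ s, (M k i) := by
    funext j
    simp [Matrix.sum_apply, Finset.sum_apply]
  calc rowNorm (∑ k ∈ s, M k) i
      = ‖(WithLp.linearEquiv 2 ℝ (β → ℝ)).symm ((∑ k ∈ s, M k) i)‖ := rowNorm_eq_norm _ _
    _ = ‖∑ k ∈ s, (WithLp.linearEquiv 2 ℝ (β → ℝ)).symm (M k i)‖ := by rw [e1, map_sum]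
    _ ≤ ∑ k ∈ s, ‖(WithLp.linearEquiv 2 ℝ (β → ℝ)).symm (M k i)‖ := norm_sum_le _ _
    _ = ∑ k ∈ s, rowNorm (M k) i :=
        Finset.sum_congr rfl fun k _ => (rowNorm_eq_norm _ _).symm

lemma prod_sub_prod_telescope {ι : Type*} [LinearOrder ι] (s : Finset ι) (f g : ι → ℝ) :
    ∏ k ∈ s, f k - ∏ k ∈ s, g k =
      ∑ k ∈ s, (∏ j ∈ s.filter (k < ·), g j) * (f k - g k) * ∏ j ∈ s.filter (· < k), f j := by
  classical
  induction s using Finset.induction_on_max with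
  | empty => simp
  | insert a s ha ih =>
    have hmem : a ∉ s := fun h => absurd (ha a h) (lt_irrefl a)
    have hfa : (insert a s).filter (a < ·) = ∅ := by
      rw [Finset.filter_eq_empty_iff]
      intro x hx
      rcases Finset.mem_insert.1 hx with rfl | hx
      · exact lt_irrefl x
      · exact fun h => absurd h (not_lt_of_gt (ha x hx))
    have hfb : (insert a s).filter (· < a) = s := by
      rw [Finset.filter_insert, if_neg (lt_irrefl a), Finset.filter_true_of_mem ha]
    have key : ∀ k ∈ s, (insert a s).filter (k < ·) = insert a (s.filter (k < ·)) :=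
      fun k hk => by rw [Finset.filter_insert, if_pos (ha k hk)]
    have key2 : ∀ k ∈ s, (insert a s).filter (· < k) = s.filter (· < k) :=
      fun k hk => by rw [Finset.filter_insert, if_neg (not_lt_of_gt (ha k hk))]
    rw [Finset.prod_insert hmem, Finset.prod_insert hmem, Finset.sum_insert hmem, hfa, hfb,
      Finset.sum_congr rfl (fun k hk => by
        rw [key k hk, key2 k hk,
          Finset.prod_insert (fun h => hmem (Finset.filter_subset _ _ h))])]
    have heq : ∑ k ∈ s, g a * (∏ j ∈ s.filter (k < ·), g j) * (f k - g k)
          * ∏ j ∈ s.filter (· < k), f j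
        = g a * (∏ k ∈ s, f k - ∏ k ∈ s, g k) := by
      rw [ih, Finset.mul_sum]
      exact Finset.sum_congr rfl fun k _ => by ring
    rw [heq, Finset.prod_empty]
    ring

lemma prod_split {K : ℕ} (k : Fin K) (f : Fin K → ℝ) :
    ∏ j, f j = ((∏ j ∈ Finset.Ioi k, f j) * f k) * ∏ j ∈ Finset.Iio k, f j := by
  rw [Finset.prod_Ioi_mul_eq_prod_Ici, ← Finset.prod_union
    (Finset.disjoint_left.2 fun x hx hx' =>
      absurd (Finset.mem_Iio.1 hx') (not_lt.2 (Finset.mem_Ici.1 hx)))]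
  congr 1
  ext x
  simp only [Finset.mem_union, Finset.mem_Ici, Finset.mem_Iio, Finset.mem_univ, true_iff]
  exact le_or_gt k x

lemma Ioi_eq_filter {K : ℕ} (k : Fin K) :
    Finset.Ioi k = Finset.univ.filter (k < ·) := by
  ext x; simp [Finset.mem_Ioi]

lemma Iio_eq_filter {K : ℕ} (k : Fin K) :
    Finset.Iio k = Finset.univ.filter (· < k) := by
  ext x; simp [Finset.mem_Iio]

theorem kronecker_perturbation_rowwise {K : ℕ} (hK : 1 ≤ K) {m n : Fin K → ℕ}
    (hm : ∀ k, 0 < m k)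
    (B C : (k : Fin K) → Matrix (Fin (m k)) (Fin (n k)) ℝ) :
    rowMaxNorm (kronPi B - kronPi C) ≤
      ∑ k : Fin K,
        (∏ j ∈ Finset.Ioi k, rowMaxNorm (C j)) * rowMaxNorm (B k - C k) *
          ∏ j ∈ Finset.Iio k, rowMaxNorm (B j) := by
  classical
  set E : Fin K → (j : Fin K) → Matrix (Fin (m j)) (Fin (n j)) ℝ :=
    fun k j => if k < j then C j else if j = k then B j - C j else B j with hE
  have hEgt : ∀ k j, k < j → E k j = C j := fun k j h => by simp [hE, h]
  have hEeq : ∀ k, E k k = B k - C k := fun k => by simp [hE]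
  have hElt : ∀ k j, j < k → E k j = B j := fun k j h => by
    simp [hE, not_lt_of_gt h, h.ne]
  have hdecomp : kronPi B - kronPi C = ∑ k : Fin K, kronPi (E k) := by
    ext i j
    simp only [Matrix.sub_apply, Matrix.sum_apply, kronPi, Matrix.of_apply]
    rw [prod_sub_prod_telescope Finset.univ]
    refine Finset.sum_congr rfl fun k _ => ?_
    rw [prod_split k (fun j' => E k j' (i j') (j j')), ← Ioi_eq_filter, ← Iio_eq_filter]
    congr 1
    · congr 1
      · exact Finset.prod_congr rfl fun x hx => by rw [hEgt k x (Finset.mem_Ioi.1 hx)]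
      · rw [hEeq k, Matrix.sub_apply]
    · exact (Finset.prod_congr rfl fun x hx => by rw [hElt k x (Finset.mem_Iio.1 hx)]).symm
  have hne : Nonempty ((k : Fin K) → Fin (m k)) := ⟨fun k => ⟨0, hm k⟩⟩
  rw [rowMaxNorm_eq_iSup, hdecomp]
  refine ciSup_le fun i => ?_
  calc rowNorm (∑ k : Fin K, kronPi (E k)) i
      ≤ ∑ k : Fin K, rowNorm (kronPi (E k)) i := rowNorm_sum_le _ _ _
    _ ≤ ∑ k : Fin K, (∏ j ∈ Finset.Ioi k, rowMaxNorm (C j)) * rowMaxNorm (B k - C k) *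
          ∏ j ∈ Finset.Iio k, rowMaxNorm (B j) := by
        refine Finset.sum_le_sum fun k _ => ?_
        rw [rowNorm_kronPi, prod_split k (fun j => rowNorm (E k j) (i j))]
        refine mul_le_mul (mul_le_mul ?_ ?_ (rowNorm_nonneg _ _)
            (Finset.prod_nonneg fun j _ => rowMaxNorm_nonneg _)) ?_
          (Finset.prod_nonneg fun j _ => rowNorm_nonneg _ _)
          (mul_nonneg (Finset.prod_nonneg fun j _ => rowMaxNorm_nonneg _)
            (rowMaxNorm_nonneg _))
        · refine Finset.prod_le_prod (fun j _ => rowNorm_nonneg _ _) fun j hj => ?_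
          rw [hEgt k j (Finset.mem_Ioi.1 hj)]
          exact rowNorm_le_rowMaxNorm _ _
        · rw [hEeq k]
          exact rowNorm_le_rowMaxNorm _ _
        · refine Finset.prod_le_prod (fun j _ => rowNorm_nonneg _ _) fun j hj => ?_
          rw [hElt k j (Finset.mem_Iio.1 hj)]
          exact rowNorm_le_rowMaxNorm _ _
end
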